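/- Let U ⊆ ℝ³ be open, let w : ℝ³ → ℝ³ be a smooth vector field with w × (curl w) = 0 and helicity density h = w · (curl w) nonzero at every point of U, and let ℓ, ψ, θ : U → ℝ be smooth functions with w = cos θ ∇ψ + sin θ ∇ℓ on U. Define L_θ = ℓ cos θ − ψ sin θ. Then w · ∇θ = 0 and w · ∇L_θ = 0 on U; that is, θ and L_θ are local integral invariants of the flow generated by w. -/

import Mathlib

noncomputable section

abbrev R3 : Type := Fin 3 → ℝ

/-- Euclidean dot product on ℝ³. -/
def dot3 (u v : R3) : ℝ := u 0 * v 0 + u 1 * v 1 + u 2 * v 2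

/-- Cross product on ℝ³. -/
def cross3 (u v : R3) : R3 :=
  ![u 1 * v 2 - u 2 * v 1, u 2 * v 0 - u 0 * v 2, u 0 * v 1 - u 1 * v 0]

/-- Euclidean norm on ℝ³. -/
def norm3 (u : R3) : ℝ := Real.sqrt (dot3 u u)

/-- Partial derivative of a scalar field in the `i`-th coordinate direction. -/
def pd (i : Fin 3) (f : R3 → ℝ) (x : R3) : ℝ := fderiv ℝ f x (Pi.single i 1)

/-- Gradient of a scalar field. -/
def grad3 (f : R3 → ℝ) (x : R3) : R3 := fun i => pd i f x

/-- Curl of a vector field. -/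
def curl3 (w : R3 → R3) (x : R3) : R3 :=
  ![pd 1 (fun y => w y 2) x - pd 2 (fun y => w y 1) x,
    pd 2 (fun y => w y 0) x - pd 0 (fun y => w y 2) x,
    pd 0 (fun y => w y 1) x - pd 1 (fun y => w y 0) x]

/-- Divergence of a vector field. -/
def div3 (w : R3 → R3) (x : R3) : ℝ :=
  pd 0 (fun y => w y 0) x + pd 1 (fun y => w y 1) x + pd 2 (fun y => w y 2) x

/-- Laplacian of a scalar field. -/
def lap3 (f : R3 → ℝ) (x : R3) : ℝ := div3 (grad3 f) x

/-!
Writing `V = cos θ ∇ℓ − sin θ ∇ψ`, the product rule and `curl ∇ = 0` give `curl w = ∇θ × V`, and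
`∇L_θ = V − (ℓ sin θ + ψ cos θ) ∇θ`; so `∇θ` and `∇L_θ` are both orthogonal to `curl w`. Since
`w × curl w = 0` and `w · curl w ≠ 0`, the field `w` is a nonzero multiple of `curl w`, hence
orthogonal to them as well.
-/

open Filter Topology

lemma dot3_cross3_self_left (a b : R3) : dot3 (cross3 a b) a = 0 := by
  simp only [dot3, cross3, Matrix.cons_val_zero, Matrix.cons_val_one, Matrix.cons_val]
  ring

lemma dot3_cross3_sub_smul_left (a b : R3) (s : ℝ) : dot3 (cross3 a b) (b - s • a) = 0 := by
  simp only [dot3, cross3, Matrix.cons_val_zero, Matrix.cons_val_one, Matrix.cons_val,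
    Pi.sub_apply, Pi.smul_apply, smul_eq_mul]
  ring

/-- Lagrange's identity `(w × c) · (w × u) = |w|² (c · u) − (w · u)(w · c)` at `w × c = 0`. -/
lemma dot3_mul_dot3_of_cross3_eq_zero {w c : R3} (h : cross3 w c = 0) (u : R3) :
    dot3 w u * dot3 w c = dot3 w w * dot3 c u := by
  have h0 := congrFun h 0
  have h1 := congrFun h 1
  have h2 := congrFun h 2
  simp only [cross3, Matrix.cons_val_zero, Matrix.cons_val_one, Matrix.cons_val,
    Pi.zero_apply] at h0 h1 h2
  simp only [dot3]
  linear_combination (w 2 * u 1 - w 1 * u 2) * h0 + (w 0 * u 2 - w 2 * u 0) * h1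
    + (w 1 * u 0 - w 0 * u 1) * h2

lemma dot3_eq_zero_of_cross3_eq_zero {w c u : R3} (hcross : cross3 w c = 0)
    (hwc : dot3 w c ≠ 0) (hcu : dot3 c u = 0) : dot3 w u = 0 := by
  have := dot3_mul_dot3_of_cross3_eq_zero hcross u
  rw [hcu, mul_zero] at this
  exact (mul_eq_zero.1 this).resolve_right hwc

section Calculus

variable {f g : R3 → ℝ} {v u : R3 → R3} {x : R3}

lemma pd_congr_of_eventuallyEq (h : f =ᶠ[𝓝 x] g) (i : Fin 3) : pd i f x = pd i g x := by
  rw [pd, pd, h.fderiv_eq]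

lemma curl3_congr_of_eventuallyEq (h : v =ᶠ[𝓝 x] u) : curl3 v x = curl3 u x := by
  have hc (k : Fin 3) : (fun y => v y k) =ᶠ[𝓝 x] fun y => u y k := h.mono fun y hy => congrFun hy k
  simp only [curl3, pd_congr_of_eventuallyEq (hc _)]

lemma grad3_mul (hf : DifferentiableAt ℝ f x) (hg : DifferentiableAt ℝ g x) :
    grad3 (fun y => f y * g y) x = f x • grad3 g x + g x • grad3 f x := by
  ext i
  simp [grad3, pd, fderiv_fun_mul hf hg]

lemma grad3_sub (hf : DifferentiableAt ℝ f x) (hg : DifferentiableAt ℝ g x) :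
    grad3 (fun y => f y - g y) x = grad3 f x - grad3 g x := by
  ext i
  simp [grad3, pd, fderiv_fun_sub hf hg]

lemma grad3_cos (hf : DifferentiableAt ℝ f x) :
    grad3 (fun y => Real.cos (f y)) x = -Real.sin (f x) • grad3 f x := by
  ext i
  simp [grad3, pd, fderiv_cos hf]

lemma grad3_sin (hf : DifferentiableAt ℝ f x) :
    grad3 (fun y => Real.sin (f y)) x = Real.cos (f x) • grad3 f x := by
  ext i
  simp [grad3, pd, fderiv_sin hf]

lemma curl3_add (hv : DifferentiableAt ℝ v x) (hu : DifferentiableAt ℝ u x) :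
    curl3 (fun y => v y + u y) x = curl3 v x + curl3 u x := by
  have hpd (j k : Fin 3) :
      pd j (fun y => v y k + u y k) x = pd j (fun y => v y k) x + pd j (fun y => u y k) x := by
    simp [pd, fderiv_fun_add (differentiableAt_pi.1 hv k) (differentiableAt_pi.1 hu k)]
  ext i
  fin_cases i <;>
  simp only [curl3, hpd, Pi.add_apply, Fin.isValue, Fin.zero_eta, Fin.mk_one, Fin.reduceFinMk,
    Matrix.cons_val_zero, Matrix.cons_val_one, Matrix.cons_val] <;>
  ring

lemma curl3_smul (hf : DifferentiableAt ℝ f x) (hv : DifferentiableAt ℝ v x) :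
    curl3 (fun y => f y • v y) x = f x • curl3 v x + cross3 (grad3 f x) (v x) := by
  have hpd (j k : Fin 3) :
      pd j (fun y => f y * v y k) x = f x * pd j (fun y => v y k) x + v x k * pd j f x := by
    simp [pd, fderiv_fun_mul hf (differentiableAt_pi.1 hv k)]
  ext i
  fin_cases i <;>
  simp only [curl3, cross3, grad3, hpd, Pi.add_apply, Pi.smul_apply, smul_eq_mul, Fin.isValue,
    Fin.zero_eta, Fin.mk_one, Fin.reduceFinMk, Matrix.cons_val_zero, Matrix.cons_val_one,
    Matrix.cons_val] <;>
  ring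

lemma pd_pd_eq (hf : DifferentiableAt ℝ (fderiv ℝ f) x) (i j : Fin 3) :
    pd i (pd j f) x = fderiv ℝ (fderiv ℝ f) x (Pi.single i 1) (Pi.single j 1) := by
  change fderiv ℝ (fun y => fderiv ℝ f y (Pi.single j 1)) x _ = _
  simp [fderiv_clm_apply hf (differentiableAt_const _)]

lemma pd_pd_comm (hf : ContDiffAt ℝ 2 f x) (i j : Fin 3) : pd i (pd j f) x = pd j (pd i f) x := by
  have hdf : DifferentiableAt ℝ (fderiv ℝ f) x :=
    (hf.fderiv_right (m := 1) le_rfl).differentiableAt one_ne_zero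
  rw [pd_pd_eq hdf, pd_pd_eq hdf]
  exact hf.isSymmSndFDerivAt (by simp) _ _

lemma differentiableAt_grad3 (hf : ContDiffAt ℝ 2 f x) : DifferentiableAt ℝ (grad3 f) x :=
  differentiableAt_pi.2 fun _ =>
    ((hf.fderiv_right (m := 1) le_rfl).differentiableAt one_ne_zero).clm_apply
      (differentiableAt_const _)

lemma curl3_grad3 (hf : ContDiffAt ℝ 2 f x) : curl3 (grad3 f) x = 0 := by
  ext i
  fin_cases i <;> simp [curl3, grad3, pd_pd_comm hf]

end Calculus

section Beltrami

variable {θ ψ ℓ : R3 → ℝ} {x : R3}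

lemma curl3_cos_smul_grad3_add_sin_smul_grad3 (hθ : DifferentiableAt ℝ θ x)
    (hψ : ContDiffAt ℝ 2 ψ x) (hℓ : ContDiffAt ℝ 2 ℓ x) :
    curl3 (fun y => Real.cos (θ y) • grad3 ψ y + Real.sin (θ y) • grad3 ℓ y) x =
      cross3 (grad3 θ x) (Real.cos (θ x) • grad3 ℓ x - Real.sin (θ x) • grad3 ψ x) := by
  have hgψ := differentiableAt_grad3 hψ
  have hgℓ := differentiableAt_grad3 hℓ
  rw [curl3_add (hθ.cos.fun_smul hgψ) (hθ.sin.fun_smul hgℓ), curl3_smul hθ.cos hgψ,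
    curl3_smul hθ.sin hgℓ, curl3_grad3 hψ, curl3_grad3 hℓ, grad3_cos hθ, grad3_sin hθ]
  ext i
  fin_cases i <;>
  simp only [cross3, smul_zero, zero_add, Pi.add_apply, Pi.sub_apply, Pi.smul_apply, smul_eq_mul,
    Fin.isValue, Fin.zero_eta, Fin.mk_one, Fin.reduceFinMk, Matrix.cons_val_zero,
    Matrix.cons_val_one, Matrix.cons_val] <;>
  ring

lemma grad3_mul_cos_sub_mul_sin (hθ : DifferentiableAt ℝ θ x)
    (hψ : DifferentiableAt ℝ ψ x) (hℓ : DifferentiableAt ℝ ℓ x) :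
    grad3 (fun y => ℓ y * Real.cos (θ y) - ψ y * Real.sin (θ y)) x =
      (Real.cos (θ x) • grad3 ℓ x - Real.sin (θ x) • grad3 ψ x)
        - (ℓ x * Real.sin (θ x) + ψ x * Real.cos (θ x)) • grad3 θ x := by
  rw [grad3_sub (hℓ.fun_mul hθ.cos) (hψ.fun_mul hθ.sin), grad3_mul hℓ hθ.cos, grad3_mul hψ hθ.sin,
    grad3_cos hθ, grad3_sin hθ]
  module

end Beltrami

theorem beltrami_local_invariants_general
    (U : Set R3) (hUopen : IsOpen U)
    (w : R3 → R3)
    (hBeltrami : ∀ x ∈ U, cross3 (w x) (curl3 w x) = 0)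
    (hhel : ∀ x ∈ U, dot3 (w x) (curl3 w x) ≠ 0)
    (ℓ ψ θ : R3 → ℝ)
    (hℓ : ContDiffOn ℝ (⊤ : ℕ∞) ℓ U) (hψ : ContDiffOn ℝ (⊤ : ℕ∞) ψ U)
    (hθ : ContDiffOn ℝ (⊤ : ℕ∞) θ U)
    (hrep : ∀ x ∈ U, w x = Real.cos (θ x) • grad3 ψ x + Real.sin (θ x) • grad3 ℓ x) :
    ∀ x ∈ U,
      dot3 (w x) (grad3 θ x) = 0 ∧
      dot3 (w x) (grad3 (fun y => ℓ y * Real.cos (θ y) - ψ y * Real.sin (θ y)) x) = 0 := by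
  intro x hx
  have hU : U ∈ 𝓝 x := hUopen.mem_nhds hx
  have h2 : ((2 : ℕ∞) : WithTop ℕ∞) ≤ ((⊤ : ℕ∞) : WithTop ℕ∞) := by exact_mod_cast le_top
  have hψ2 : ContDiffAt ℝ 2 ψ x := (hψ.contDiffAt hU).of_le h2
  have hℓ2 : ContDiffAt ℝ 2 ℓ x := (hℓ.contDiffAt hU).of_le h2
  have hθ1 : DifferentiableAt ℝ θ x := (hθ.contDiffAt hU).differentiableAt (by simp)
  have hcurl : curl3 w x = cross3 (grad3 θ x)
      (Real.cos (θ x) • grad3 ℓ x - Real.sin (θ x) • grad3 ψ x) := by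
    rw [curl3_congr_of_eventuallyEq (eventually_of_mem hU hrep)]
    exact curl3_cos_smul_grad3_add_sin_smul_grad3 hθ1 hψ2 hℓ2
  have orthogonal_to_w (u : R3) (hu : dot3 (curl3 w x) u = 0) : dot3 (w x) u = 0 :=
    dot3_eq_zero_of_cross3_eq_zero (hBeltrami x hx) (hhel x hx) hu
  refine ⟨orthogonal_to_w _ ?_, orthogonal_to_w _ ?_⟩
  · rw [hcurl]
    exact dot3_cross3_self_left _ _
  · rw [hcurl, grad3_mul_cos_sub_mul_sin hθ1 (hψ2.differentiableAt two_ne_zero)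
      (hℓ2.differentiableAt two_ne_zero)]
    exact dot3_cross3_sub_smul_left _ _ _

/-- A nontrivial Beltrami flow admits the two local invariants `θ` and
`L_θ = ℓ cos θ − ψ sin θ`. -/
theorem beltrami_local_invariants
    (U : Set R3) (hUopen : IsOpen U)
    (w : R3 → R3) (hw : ContDiff ℝ (⊤ : ℕ∞) w)
    (hBeltrami : ∀ x ∈ U, cross3 (w x) (curl3 w x) = 0)
    (hhel : ∀ x ∈ U, dot3 (w x) (curl3 w x) ≠ 0)
    (ℓ ψ θ : R3 → ℝ)
    (hℓ : ContDiffOn ℝ (⊤ : ℕ∞) ℓ U) (hψ : ContDiffOn ℝ (⊤ : ℕ∞) ψ U)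
    (hθ : ContDiffOn ℝ (⊤ : ℕ∞) θ U)
    (hrep : ∀ x ∈ U, w x = Real.cos (θ x) • grad3 ψ x + Real.sin (θ x) • grad3 ℓ x) :
    ∀ x ∈ U,
      dot3 (w x) (grad3 θ x) = 0 ∧
      dot3 (w x) (grad3 (fun y => ℓ y * Real.cos (θ y) - ψ y * Real.sin (θ y)) x) = 0 :=
  beltrami_local_invariants_general U hUopen w hBeltrami hhel ℓ ψ θ hℓ hψ hθ hrep
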